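/- arXiv:2602.00487 — 5 statements merged into one kernel-verified Lean document; each statement's English description precedes it below -/
import Mathlib

section
/- Let F_M be a cumulative distribution function on [0, v̄] with density f_M, and suppose the map x ↦ x·f_M(x)/F_M(x) is non-increasing on (0, v̄]. Then for every fixed t ∈ (0,1), the ratio k ↦ F_M(t·k)/F_M(k) is non-decreasing in k on (0, v̄] (wherever F_M(k) > 0). -/
/-! The logarithmic derivative of `k ↦ F (t * k) / F k` is `(g (t * k) - g k) / k` with
`g x = x * f x / F x`, and `t * k ≤ k` makes this nonnegative when `g` is antitone. -/

open Set

lemma hasDerivAt_comp_const_mul_div_self {F f : ℝ → ℝ} {t k : ℝ} (hk : k ≠ 0)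
    (hFtk : F (t * k) ≠ 0) (hFk : F k ≠ 0) (hFtk' : HasDerivAt F (f (t * k)) (t * k))
    (hFk' : HasDerivAt F (f k) k) :
    HasDerivAt (fun x => F (t * x) / F x)
      (F (t * k) / F k / k * (t * k * f (t * k) / F (t * k) - k * f k / F k)) k := by
  have hcomp : HasDerivAt (fun x => F (t * x)) (f (t * k) * t) k := by
    simpa [Function.comp_def] using hFtk'.comp k ((hasDerivAt_id k).const_mul t)
  refine (hcomp.div hFk' hFk).congr_deriv ?_
  field_simp

theorem monotoneOn_comp_const_mul_div_self {F f : ℝ → ℝ} {b t : ℝ} (ht : t ∈ Ioc 0 1)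
    (hderiv : ∀ x ∈ Ioc 0 b, HasDerivAt F (f x) x) (hF_pos : ∀ x ∈ Ioc 0 b, 0 < F x)
    (hanti : AntitoneOn (fun x => x * f x / F x) (Ioc 0 b)) :
    MonotoneOn (fun k => F (t * k) / F k) (Ioc 0 b) := by
  have hle : ∀ k ∈ Ioc 0 b, t * k ≤ k := fun k hk => mul_le_of_le_one_left hk.1.le ht.2
  have hmem : ∀ k ∈ Ioc 0 b, t * k ∈ Ioc 0 b := fun k hk =>
    ⟨mul_pos ht.1 hk.1, (hle k hk).trans hk.2⟩
  have hcont : ContinuousOn F (Ioc 0 b) := fun x hx => (hderiv x hx).continuousAt.continuousWithinAt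
  refine monotoneOn_of_hasDerivWithinAt_nonneg (convex_Ioc 0 b)
    (f' := fun k => F (t * k) / F k / k * (t * k * f (t * k) / F (t * k) - k * f k / F k))
    ((hcont.comp (continuous_const_mul t).continuousOn hmem).div hcont
      fun k hk => (hF_pos k hk).ne') (fun k hk => ?_) fun k hk => ?_
  all_goals
    rw [interior_Ioc] at hk
    have hk' : k ∈ Ioc 0 b := Ioo_subset_Ioc_self hk
  · exact (hasDerivAt_comp_const_mul_div_self hk.1.ne' (hF_pos _ (hmem k hk')).ne'
      (hF_pos k hk').ne' (hderiv _ (hmem k hk')) (hderiv k hk')).hasDerivWithinAt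
  · have hratio : 0 ≤ F (t * k) / F k / k :=
      div_nonneg (div_nonneg (hF_pos _ (hmem k hk')).le (hF_pos k hk').le) hk.1.le
    exact mul_nonneg hratio (sub_nonneg.2 (hanti (hmem k hk') hk' (hle k hk')))

theorem ratio_cdf_monotone_general
    (F f : ℝ → ℝ) (vbar : ℝ)
    (hderiv : ∀ x, HasDerivAt F (f x) x)
    (hF_pos : ∀ k ∈ Set.Ioc (0 : ℝ) vbar, 0 < F k)
    (hanti : AntitoneOn (fun x => x * f x / F x) (Set.Ioc (0 : ℝ) vbar)) :
    ∀ t ∈ Set.Ioo (0 : ℝ) 1,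
      MonotoneOn (fun k => F (t * k) / F k) (Set.Ioc (0 : ℝ) vbar) :=
  fun _ ht => monotoneOn_comp_const_mul_div_self (Ioo_subset_Ioc_self ht)
    (fun x _ => hderiv x) hF_pos hanti

/-- If `x ↦ x * f x / F x` is non-increasing on `(0, v̄]` for a CDF `F` with density `f`
supported on `[0, v̄]`, then for every `t ∈ (0,1)` the map `k ↦ F (t*k) / F k` is
non-decreasing on `(0, v̄]`. -/
theorem ratio_cdf_monotone
    (F f : ℝ → ℝ) (vbar : ℝ) (hvbar : 0 < vbar)
    (hderiv : ∀ x, HasDerivAt F (f x) x)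
    (hf_nonneg : ∀ x, 0 ≤ f x)
    (hF_pos : ∀ k ∈ Set.Ioc (0 : ℝ) vbar, 0 < F k)
    (hanti : AntitoneOn (fun x => x * f x / F x) (Set.Ioc (0 : ℝ) vbar)) :
    ∀ t ∈ Set.Ioo (0 : ℝ) 1,
      MonotoneOn (fun k => F (t * k) / F k) (Set.Ioc (0 : ℝ) vbar) :=
  ratio_cdf_monotone_general F f vbar hderiv hF_pos hanti
end

section
/- Let Γ = {θ ∈ ℝ₊^N : Σ θ_i = 1} be the probability simplex and for θ, θ' ∈ Γ with θ_i, θ'_i > 0 write θ ≻_i θ' if θ_k/θ_i ≤ θ'_k/θ'_i for all k ≠ i. Let x : Γ → ℝ₊^N be an incentive-compatible allocation rule, i.e. θ·x(θ) ≥ θ·x(θ') for all θ,θ' ∈ Γ, and let U(θ) := θ·x(θ). Then for every i and every θ, θ' ∈ Γ with θ_i, θ'_i > 0 and θ ≻_i θ', we have U(θ')/θ'_i ≥ U(θ)/θ_i. -/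
/-- Ratio monotonicity of implementable indirect utilities: if `x` is incentive
compatible on the simplex and `θ ≻ᵢ θ'` (i.e. `θ k / θ i ≤ θ' k / θ' i` for all
`k ≠ i`), then `U(θ')/θ'ᵢ ≥ U(θ)/θᵢ`. -/
theorem ratio_monotonicity
    (N : ℕ) (hN : 2 ≤ N)
    (x : (Fin N → ℝ) → Fin N → ℝ)
    (hx_nonneg : ∀ θ ∈ stdSimplex ℝ (Fin N), ∀ i, 0 ≤ x θ i)
    (hIC : ∀ θ ∈ stdSimplex ℝ (Fin N), ∀ θ' ∈ stdSimplex ℝ (Fin N),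
      ∑ i, θ i * x θ' i ≤ ∑ i, θ i * x θ i)
    (U : (Fin N → ℝ) → ℝ) (hU : ∀ θ, U θ = ∑ i, θ i * x θ i) :
    ∀ i : Fin N, ∀ θ ∈ stdSimplex ℝ (Fin N), ∀ θ' ∈ stdSimplex ℝ (Fin N),
      0 < θ i → 0 < θ' i →
      (∀ k, k ≠ i → θ k / θ i ≤ θ' k / θ' i) →
      U θ / θ i ≤ U θ' / θ' i := by
  intro i θ hθ θ' hθ' hi hi' hdom
  have h1 : U θ / θ i = ∑ k, (θ k / θ i) * x θ k := by
    rw [hU, Finset.sum_div]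
    exact Finset.sum_congr rfl fun k _ => by ring
  have h2 : (∑ k, θ' k * x θ k) / θ' i = ∑ k, (θ' k / θ' i) * x θ k := by
    rw [Finset.sum_div]
    exact Finset.sum_congr rfl fun k _ => by ring
  have h3 : ∑ k, (θ k / θ i) * x θ k ≤ ∑ k, (θ' k / θ' i) * x θ k := by
    apply Finset.sum_le_sum
    intro k _
    rcases eq_or_ne k i with rfl | hk
    · rw [div_self hi.ne', div_self hi'.ne']
    · exact mul_le_mul_of_nonneg_right (hdom k hk) (hx_nonneg θ hθ k)
  have h4 : (∑ k, θ' k * x θ k) / θ' i ≤ U θ' / θ' i := by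
    rw [hU θ']
    exact div_le_div_of_nonneg_right (hIC θ' hθ' θ hθ) hi'.le
  calc U θ / θ i = ∑ k, (θ k / θ i) * x θ k := h1
    _ ≤ ∑ k, (θ' k / θ' i) * x θ k := h3
    _ = (∑ k, θ' k * x θ k) / θ' i := h2.symm
    _ ≤ U θ' / θ' i := h4
end

section
/- Let G be a probability measure with full support on the probability simplex Γ ⊂ ℝ^N, let s ∈ ℝ^N with s_i > 0, and let x : Γ → ℝ₊^N be an allocation rule satisfying the supply constraint ∫_Γ x dG ≤ s and incentive compatibility θ·x(θ) ≥ θ·x(θ') for all θ, θ'. Then x is uniformly bounded: there exists a constant C such that x_i(θ) ≤ C for all i and all θ ∈ Γ. -/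
open MeasureTheory

/-! Incentive compatibility for the vertex type `eᵢ = Pi.single i 1` reads `x θ' i ≤ x eᵢ i`,
so the allocations that the `N` vertex types receive bound the allocation of every type. -/

variable {𝕜 ι : Type*} [Semiring 𝕜] [PartialOrder 𝕜] [Fintype ι]

def IncentiveCompatible (x : (ι → 𝕜) → ι → 𝕜) : Prop :=
  ∀ θ ∈ stdSimplex 𝕜 ι, ∀ θ' ∈ stdSimplex 𝕜 ι, ∑ i, θ i * x θ' i ≤ ∑ i, θ i * x θ i

namespace IncentiveCompatible

variable {x : (ι → 𝕜) → ι → 𝕜}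

theorem apply_le_apply_single [DecidableEq ι] [ZeroLEOneClass 𝕜] (hx : IncentiveCompatible x)
    (i : ι) {θ : ι → 𝕜} (hθ : θ ∈ stdSimplex 𝕜 ι) : x θ i ≤ x (Pi.single i 1) i := by
  simpa [Pi.single_apply] using hx _ (single_mem_stdSimplex 𝕜 i) θ hθ

theorem exists_bound [IsDirectedOrder 𝕜] [ZeroLEOneClass 𝕜] (hx : IncentiveCompatible x) :
    ∃ C : 𝕜, ∀ i, ∀ θ ∈ stdSimplex 𝕜 ι, x θ i ≤ C := by
  classical
  obtain ⟨C, hC⟩ := Finite.exists_le fun i : ι ↦ x (Pi.single i 1) i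
  exact ⟨C, fun i θ hθ ↦ (hx.apply_le_apply_single i hθ).trans (hC i)⟩

end IncentiveCompatible

theorem feasible_allocation_bounded_general
    (N : ℕ)
    (x : (Fin N → ℝ) → Fin N → ℝ)
    (hIC : ∀ θ ∈ stdSimplex ℝ (Fin N), ∀ θ' ∈ stdSimplex ℝ (Fin N),
      ∑ i, θ i * x θ' i ≤ ∑ i, θ i * x θ i) :
    ∃ C : ℝ, ∀ i : Fin N, ∀ θ ∈ stdSimplex ℝ (Fin N), x θ i ≤ C :=
  IncentiveCompatible.exists_bound hIC

/-- A feasible (supply-constrained) incentive-compatible allocation rule on the simplex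
is uniformly bounded. -/
theorem feasible_allocation_bounded
    (N : ℕ) (hN : 2 ≤ N)
    (G : Measure (Fin N → ℝ)) [IsProbabilityMeasure G]
    (hGsupp : G (stdSimplex ℝ (Fin N))ᶜ = 0)
    (hGfull : ∀ U : Set (Fin N → ℝ), IsOpen U →
      (U ∩ stdSimplex ℝ (Fin N)).Nonempty → 0 < G U)
    (s : Fin N → ℝ) (hs : ∀ i, 0 < s i)
    (x : (Fin N → ℝ) → Fin N → ℝ)
    (hx_meas : ∀ i, Measurable fun θ => x θ i)
    (hx_nonneg : ∀ θ ∈ stdSimplex ℝ (Fin N), ∀ i, 0 ≤ x θ i)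
    (hsupply : ∀ i, ∫ θ, x θ i ∂G ≤ s i)
    (hIC : ∀ θ ∈ stdSimplex ℝ (Fin N), ∀ θ' ∈ stdSimplex ℝ (Fin N),
      ∑ i, θ i * x θ' i ≤ ∑ i, θ i * x θ i) :
    ∃ C : ℝ, ∀ i : Fin N, ∀ θ ∈ stdSimplex ℝ (Fin N), x θ i ≤ C :=
  feasible_allocation_bounded_general N x hIC
end

section
/- Let Γ be the 1-simplex identified with t ∈ [0,1] via θ = (1−t, t). Let Δx : [1/2,1] → ℝ₊ be non-decreasing with lim_{t↓1/2} Δx(t) well-defined, and define via the envelope formula x₁(1−t,t) := x₁(0,1) + Δx(1) − ∫_t^1 Δx(z) dz − t·Δx(t) for t ∈ [1/2,1]. Then x₁(1−t,t) is non-increasing in t on [1/2,1]; in particular, x₁(1−t,t) ≥ 0 for all t ∈ [1/2,1] if and only if x₁(0,1) ≥ 0. -/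
open intervalIntegral

/-- The payment rule recovered from the envelope formula,
`x₁(1−t,t) = c + Δx(1) − ∫ₜ¹ Δx − t·Δx(t)`, is non-increasing on `[1/2,1]`; hence it is
nonnegative on `[1/2,1]` iff `c = x₁(0,1) ≥ 0`. -/
theorem envelope_payment_antitone
    (Δx : ℝ → ℝ)
    (hmono : MonotoneOn Δx (Set.Icc (1/2 : ℝ) 1))
    (hnonneg : ∀ t ∈ Set.Icc (1/2 : ℝ) 1, 0 ≤ Δx t)
    (c : ℝ)
    (X₁ : ℝ → ℝ)
    (hX₁ : ∀ t, X₁ t = c + Δx 1 - (∫ z in t..1, Δx z) - t * Δx t) :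
    AntitoneOn X₁ (Set.Icc (1/2 : ℝ) 1) ∧
      ((∀ t ∈ Set.Icc (1/2 : ℝ) 1, 0 ≤ X₁ t) ↔ 0 ≤ c) := by
  have hanti : AntitoneOn X₁ (Set.Icc (1/2 : ℝ) 1) := by
    intro t ht t' ht' htt'
    have hsub : Set.Icc t t' ⊆ Set.Icc (1/2 : ℝ) 1 :=
      Set.Icc_subset_Icc ht.1 ht'.2
    have hmono' : MonotoneOn Δx (Set.Icc t t') := hmono.mono hsub
    have hint : IntervalIntegrable Δx MeasureTheory.volume t t' := by
      apply MonotoneOn.intervalIntegrable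
      rwa [Set.uIcc_of_le htt']
    have hint1 : IntervalIntegrable Δx MeasureTheory.volume t' 1 := by
      apply MonotoneOn.intervalIntegrable
      rw [Set.uIcc_of_le ht'.2]
      exact hmono.mono (Set.Icc_subset_Icc ht'.1 le_rfl)
    have hsplit : (∫ z in t..1, Δx z) = (∫ z in t..t', Δx z) + ∫ z in t'..1, Δx z :=
      (intervalIntegral.integral_add_adjacent_intervals hint hint1).symm
    have hbound : (∫ z in t..t', Δx z) ≤ (t' - t) * Δx t' := by
      have : (∫ z in t..t', Δx z) ≤ ∫ _z in t..t', Δx t' := by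
        apply intervalIntegral.integral_mono_on htt' hint intervalIntegrable_const
        intro z hz
        exact hmono (hsub hz) ht' hz.2
      simpa using this
    have hkey : t' * Δx t' - t * Δx t - (∫ z in t..t', Δx z) ≥ 0 := by
      have h1 : t * Δx t ≤ t * Δx t' := by
        have := hmono ht ht' htt'
        have h0 : (0:ℝ) ≤ t := le_trans (by norm_num) ht.1
        nlinarith
      nlinarith
    rw [hX₁ t, hX₁ t', hsplit]
    linarith
  refine ⟨hanti, ?_⟩
  have h1mem : (1:ℝ) ∈ Set.Icc (1/2 : ℝ) 1 := by norm_num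
  have hX1 : X₁ 1 = c := by
    rw [hX₁ 1]; simp
  constructor
  · intro h
    have := h 1 h1mem
    linarith [hX1 ▸ this]
  · intro hc t ht
    have := hanti ht h1mem ht.2
    rw [hX1] at this
    linarith
end

section
/- Consider the game in which a continuum of agents, each with type θ in the probability simplex Γ distributed according to G, simultaneously choose a good i ∈ {1,…,N}; if mass m_i chooses good i, each such agent receives the bundle (s_i/m_i)·e_i (with payoff +∞ if m_i = 0). Suppose an action profile a : Γ → {1,…,N} is a Nash equilibrium with all m_i > 0, i.e., for a.e. θ: θ_{a(θ)}·(s_{a(θ)}/m_{a(θ)}) ≥ θ_j·(s_j/m_j) for all j. Then setting q_j := s_j/m_j and p_j := 1/q_j, the induced allocation x(θ) = q_{a(θ)}·e_{a(θ)} satisfies: x(θ) maximizes θ·z over the budget set {z ∈ ℝ₊^N : p·z ≤ 1} for a.e. θ, and ∫_Γ x dG = s; i.e., (p, x) is a competitive equilibrium with equal incomes. -/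
open MeasureTheory

/-! A Nash equilibrium says exactly that each type's chosen good `a θ` maximizes `θ j * q j`.
At prices `p j = 1 / q j` the budget set is the convex hull of `0` and the vertices `q j • e j`,
so for `θ ≥ 0` a linear utility on it is bounded by `max_j θ j * q j`, which the bundle `x θ`
attains. Markets clear because mass `m i` receives `q i = s i / m i` of good `i` each. -/

theorem sum_mul_le_of_le_mul_of_budget {ι : Type*} [Fintype ι] {θ p z : ι → ℝ} {c : ℝ}
    (hθ : ∀ j, θ j ≤ c * p j) (hc : 0 ≤ c) (hz : ∀ j, 0 ≤ z j)
    (hbudget : ∑ j, p j * z j ≤ 1) :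
    ∑ j, θ j * z j ≤ c :=
  calc ∑ j, θ j * z j ≤ ∑ j, c * (p j * z j) :=
        Finset.sum_le_sum fun j _ => by
          rw [← mul_assoc]; exact mul_le_mul_of_nonneg_right (hθ j) (hz j)
    _ = c * ∑ j, p j * z j := (Finset.mul_sum _ _ _).symm
    _ ≤ c := mul_le_of_le_one_right hc hbudget

theorem integral_pi_single_apply {α ι : Type*} [MeasurableSpace α] [DecidableEq ι]
    [MeasurableSpace ι] [MeasurableSingletonClass ι] {μ : Measure α} {a : α → ι}
    (ha : Measurable a) (q : ι → ℝ) (i : ι) :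
    ∫ x, (Pi.single (a x) (q (a x)) : ι → ℝ) i ∂μ = μ.real {x | a x = i} * q i := by
  have hindicator : (fun x => (Pi.single (a x) (q (a x)) : ι → ℝ) i) =
      {x | a x = i}.indicator fun _ => q i := by
    funext x
    by_cases h : a x = i <;> simp [h]
  have hmeas : MeasurableSet {x | a x = i} := ha (measurableSet_singleton i)
  rw [hindicator, integral_indicator_const _ hmeas, smul_eq_mul]

theorem nash_equilibrium_induces_CEEI_general
    (N : ℕ)
    (G : Measure (Fin N → ℝ))
    (hGsupp : G (stdSimplex ℝ (Fin N))ᶜ = 0)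
    (s : Fin N → ℝ) (hs : ∀ i, 0 < s i)
    (a : (Fin N → ℝ) → Fin N) (ha : Measurable a)
    (m : Fin N → ℝ) (hm : ∀ i, m i = (G {θ | a θ = i}).toReal)
    (hmpos : ∀ i, 0 < m i)
    (hNash : ∀ᵐ θ ∂G, ∀ j : Fin N,
      θ j * (s j / m j) ≤ θ (a θ) * (s (a θ) / m (a θ)))
    (q p : Fin N → ℝ)
    (hq : ∀ j, q j = s j / m j) (hp : ∀ j, p j = 1 / q j)
    (x : (Fin N → ℝ) → Fin N → ℝ)
    (hx : ∀ θ, x θ = (Pi.single (a θ) (q (a θ)) : Fin N → ℝ)) :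
    (∀ j, 0 < p j) ∧
    (∀ᵐ θ ∂G, ∀ z : Fin N → ℝ, (∀ j, 0 ≤ z j) → ∑ j, p j * z j ≤ 1 →
      ∑ j, θ j * z j ≤ ∑ j, θ j * x θ j) ∧
    (∀ i, ∫ θ, x θ i ∂G = s i) := by
  have hq_pos j : 0 < q j := hq j ▸ div_pos (hs j) (hmpos j)
  refine ⟨fun j => hp j ▸ one_div_pos.mpr (hq_pos j), ?_, fun i => ?_⟩
  · have hsimplex : ∀ᵐ θ ∂G, θ ∈ stdSimplex ℝ (Fin N) := ae_iff.mpr hGsupp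
    filter_upwards [hNash, hsimplex] with θ hbest hθ z hz hbudget
    simp only [← hq] at hbest
    have hvalue : ∑ j, θ j * x θ j = θ (a θ) * q (a θ) := by
      rw [hx]; exact dotProduct_single θ (q (a θ)) (a θ)
    rw [hvalue]
    refine sum_mul_le_of_le_mul_of_budget (fun j => ?_) ?_ hz hbudget
    · rw [hp, ← div_eq_mul_one_div, le_div_iff₀ (hq_pos j)]
      exact hbest j
    · exact mul_nonneg (hθ.1 _) (hq_pos _).le
  · simp only [hx]
    rw [integral_pi_single_apply ha, measureReal_def, ← hm, hq]
    exact mul_div_cancel₀ _ (hmpos i).ne'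

/-- Any Nash equilibrium of the lottery-choice game (with all goods demanded by a
positive mass) induces a competitive equilibrium with equal incomes: a.e. type's
bundle maximizes utility on the unit budget set at prices `p j = m j / s j`, and
aggregate demand equals supply. -/
theorem nash_equilibrium_induces_CEEI
    (N : ℕ) (hN : 2 ≤ N)
    (G : Measure (Fin N → ℝ)) [IsProbabilityMeasure G]
    (hGsupp : G (stdSimplex ℝ (Fin N))ᶜ = 0)
    (s : Fin N → ℝ) (hs : ∀ i, 0 < s i)
    (a : (Fin N → ℝ) → Fin N) (ha : Measurable a)
    (m : Fin N → ℝ) (hm : ∀ i, m i = (G {θ | a θ = i}).toReal)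
    (hmpos : ∀ i, 0 < m i)
    (hNash : ∀ᵐ θ ∂G, ∀ j : Fin N,
      θ j * (s j / m j) ≤ θ (a θ) * (s (a θ) / m (a θ)))
    (q p : Fin N → ℝ)
    (hq : ∀ j, q j = s j / m j) (hp : ∀ j, p j = 1 / q j)
    (x : (Fin N → ℝ) → Fin N → ℝ)
    (hx : ∀ θ, x θ = (Pi.single (a θ) (q (a θ)) : Fin N → ℝ)) :
    (∀ j, 0 < p j) ∧
    (∀ᵐ θ ∂G, ∀ z : Fin N → ℝ, (∀ j, 0 ≤ z j) → ∑ j, p j * z j ≤ 1 →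
      ∑ j, θ j * z j ≤ ∑ j, θ j * x θ j) ∧
    (∀ i, ∫ θ, x θ i ∂G = s i) :=
  nash_equilibrium_induces_CEEI_general N G hGsupp s hs a ha m hm hmpos hNash q p hq hp x hx
end
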